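/- Let G=(V,E) be a finite simple graph with boundary set ∂V ⊆ V such that every diagonal entry of D is strictly positive. Then the matrix Q^{1/2}·𝓛_R·Q^{-1/2} is symmetric and positive semidefinite, and D^{1/2}·Q^{1/2}·1 is an eigenvector of Q^{1/2}·𝓛_R·Q^{-1/2} with eigenvalue 0. -/

import Mathlib

open Matrix Finset

namespace RN

variable {V : Type*}

/-- The adjacency matrix of `G` with real entries. -/
noncomputable def adjMat [Fintype V] [DecidableEq V] (G : SimpleGraph V) [DecidableRel G.Adj] :
    Matrix V V ℝ :=
  Matrix.of fun u v => if G.Adj u v then 1 else 0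

/-- The reflected adjacency matrix `R = [[A₁₁, A₁₂],[2A₁₂ᵀ, A₂₂]]`, where the first block is
indexed by the interior vertices and the second block by the boundary vertices `B`. -/
noncomputable def reflAdj [Fintype V] [DecidableEq V] (G : SimpleGraph V) [DecidableRel G.Adj]
    (B : Finset V) : Matrix V V ℝ :=
  Matrix.of fun u v => (if u ∈ B ∧ v ∉ B then 2 else 1) * adjMat G u v

/-- The diagonal entries of `D = diag(R·1)`. -/
noncomputable def deg [Fintype V] [DecidableEq V] (G : SimpleGraph V) [DecidableRel G.Adj]
    (B : Finset V) (v : V) : ℝ :=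
  ∑ w, reflAdj G B v w

/-- `D = diag(R·1)`. -/
noncomputable def Dmat [Fintype V] [DecidableEq V] (G : SimpleGraph V) [DecidableRel G.Adj]
    (B : Finset V) : Matrix V V ℝ :=
  Matrix.diagonal (deg G B)

/-- The reflected Neumann Laplacian `L_R = D - R`. -/
noncomputable def LR [Fintype V] [DecidableEq V] (G : SimpleGraph V) [DecidableRel G.Adj]
    (B : Finset V) : Matrix V V ℝ :=
  Dmat G B - reflAdj G B

/-- The weight `q_v`, which is `1` on interior vertices and `1/2` on boundary vertices. -/
noncomputable def qw [DecidableEq V] (B : Finset V) (v : V) : ℝ := if v ∈ B then 1/2 else 1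

/-- The diagonal matrix `Q` with entries `1` on the interior and `1/2` on the boundary. -/
noncomputable def Qmat [Fintype V] [DecidableEq V] (B : Finset V) : Matrix V V ℝ :=
  Matrix.diagonal (qw B)

/-- `D^{1/2}`. -/
noncomputable def Dhalf [Fintype V] [DecidableEq V] (G : SimpleGraph V) [DecidableRel G.Adj]
    (B : Finset V) : Matrix V V ℝ :=
  Matrix.diagonal fun v => Real.sqrt (deg G B v)

/-- `D^{-1/2}`. -/
noncomputable def Dinvhalf [Fintype V] [DecidableEq V] (G : SimpleGraph V) [DecidableRel G.Adj]
    (B : Finset V) : Matrix V V ℝ :=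
  Matrix.diagonal fun v => (Real.sqrt (deg G B v))⁻¹

/-- The normalized reflected Neumann Laplacian `𝓛_R = D^{-1/2} L_R D^{-1/2}`. -/
noncomputable def NLR [Fintype V] [DecidableEq V] (G : SimpleGraph V) [DecidableRel G.Adj]
    (B : Finset V) : Matrix V V ℝ :=
  Dinvhalf G B * LR G B * Dinvhalf G B

/-- `Q^{1/2}`. -/
noncomputable def Qhalf [Fintype V] [DecidableEq V] (B : Finset V) : Matrix V V ℝ :=
  Matrix.diagonal fun v => Real.sqrt (qw B v)

/-- `Q^{-1/2}`. -/
noncomputable def Qinvhalf [Fintype V] [DecidableEq V] (B : Finset V) : Matrix V V ℝ :=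
  Matrix.diagonal fun v => (Real.sqrt (qw B v))⁻¹

end RN

open RN

/-!
Multiplying by `Q` symmetrises the reflected adjacency matrix: the factor `2` on the
boundary-to-interior entries of `R` is cancelled by the weight `1/2` of the boundary rows.
Hence `Q L_R = diag(S 1) - S` for the symmetric nonnegative matrix `S = Q R`, a weighted graph
Laplacian, whose quadratic form is `½ ∑ S_ij (x_i - x_j)²`. Since diagonal matrices commute,
`Q^{1/2} 𝓛_R Q^{-1/2} = P (Q L_R) Pᵀ` with `P = D^{-1/2} Q^{-1/2}`, a congruence, so it is
positive semidefinite. The kernel vector `1` of `L_R` is carried by `(Pᵀ)⁻¹ = D^{1/2} Q^{1/2}`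
to the stated eigenvector.
-/

namespace Matrix

variable {n R : Type*} [Fintype n] [DecidableEq n]

theorem two_mul_dotProduct_diagonal_mulVec_one_sub_mulVec [CommRing R] {S : Matrix n n R}
    (hS : S.IsSymm) (x : n → R) :
    2 * x ⬝ᵥ ((diagonal (S *ᵥ 1) - S) *ᵥ x) = ∑ i, ∑ j, S i j * (x i - x j) ^ 2 := by
  have hswap : ∑ i, ∑ j, S i j * x j ^ 2 = ∑ i, ∑ j, S i j * x i ^ 2 := by
    rw [Finset.sum_comm]
    simp_rw [hS.apply]
  have hexp : ∑ i, ∑ j, S i j * (x i - x j) ^ 2 = ∑ i, ∑ j, S i j * x i ^ 2 +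
      ∑ i, ∑ j, S i j * x j ^ 2 - 2 * ∑ i, ∑ j, x i * S i j * x j := by
    simp only [Finset.mul_sum, ← Finset.sum_add_distrib, ← Finset.sum_sub_distrib]
    exact Finset.sum_congr rfl fun i _ => Finset.sum_congr rfl fun j _ => by ring
  have hdiag : x ⬝ᵥ (diagonal (S *ᵥ 1) *ᵥ x) = ∑ i, ∑ j, S i j * x i ^ 2 := by
    simp only [dotProduct, mulVec_diagonal]
    simp only [mulVec, dotProduct, Pi.one_apply, mul_one, Finset.sum_mul, Finset.mul_sum]
    exact Finset.sum_congr rfl fun i _ => Finset.sum_congr rfl fun j _ => by ring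
  have hoff : x ⬝ᵥ (S *ᵥ x) = ∑ i, ∑ j, x i * S i j * x j := by
    simp only [dotProduct, mulVec, Finset.mul_sum, mul_assoc]
  rw [hexp, hswap, sub_mulVec, dotProduct_sub, hdiag, hoff]
  ring

theorem posSemidef_diagonal_mulVec_one_sub [CommRing R] [LinearOrder R] [IsStrictOrderedRing R]
    [StarRing R] [TrivialStar R] {S : Matrix n n R} (hS : S.IsSymm) (hS₀ : ∀ i j, 0 ≤ S i j) :
    (diagonal (S *ᵥ 1) - S).PosSemidef := by
  refine .of_dotProduct_mulVec_nonneg ?_ fun x => ?_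
  · exact (isHermitian_diagonal _).sub (isHermitian_iff_isSymm.2 hS)
  · have h := two_mul_dotProduct_diagonal_mulVec_one_sub_mulVec hS x
    have : 0 ≤ ∑ i, ∑ j, S i j * (x i - x j) ^ 2 :=
      Finset.sum_nonneg fun i _ => Finset.sum_nonneg fun j _ => mul_nonneg (hS₀ i j) (sq_nonneg _)
    rw [star_trivial]
    linarith

theorem diagonal_mulVec_one_sub_mulVec_one [NonAssocRing R] (S : Matrix n n R) :
    (diagonal (S *ᵥ 1) - S) *ᵥ 1 = 0 := by
  ext i
  simp [sub_mulVec, mulVec_diagonal]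

end Matrix

namespace RN

lemma qw_pos {V : Type*} [DecidableEq V] (B : Finset V) (v : V) : 0 < qw B v := by
  unfold qw; split_ifs <;> norm_num

variable {V : Type*} [Fintype V] [DecidableEq V] (G : SimpleGraph V) [DecidableRel G.Adj]
  (B : Finset V)

lemma reflAdj_nonneg (u v : V) : 0 ≤ reflAdj G B u v := by
  unfold reflAdj adjMat
  simp only [of_apply]
  split_ifs <;> norm_num

lemma Qmat_mul_reflAdj_nonneg (u v : V) : 0 ≤ (Qmat B * reflAdj G B) u v := by
  rw [Qmat, diagonal_mul]
  exact mul_nonneg (qw_pos B u).le (reflAdj_nonneg G B u v)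

lemma isSymm_Qmat_mul_reflAdj : (Qmat B * reflAdj G B).IsSymm := by
  refine IsSymm.ext fun u v => ?_
  simp only [Qmat, diagonal_mul, qw, reflAdj, adjMat, of_apply, G.adj_comm u v]
  by_cases hu : u ∈ B <;> by_cases hv : v ∈ B <;> simp [hu, hv]

lemma Qmat_mul_LR :
    Qmat B * LR G B = diagonal ((Qmat B * reflAdj G B) *ᵥ 1) - Qmat B * reflAdj G B := by
  have hdeg : deg G B = reflAdj G B *ᵥ 1 := by
    ext v; simp [deg, mulVec, dotProduct]
  rw [LR, Dmat, Matrix.mul_sub, ← mulVec_mulVec, Qmat, diagonal_mul_diagonal, hdeg]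
  congr 2
  ext v; rw [mulVec_diagonal]

lemma Qinvhalf_mul_Qmat : Qinvhalf B * Qmat B = Qhalf B := by
  rw [Qinvhalf, Qmat, Qhalf, diagonal_mul_diagonal]
  simp only [inv_mul_eq_div, Real.div_sqrt]

lemma conjTranspose_Dinvhalf_mul_Qinvhalf :
    (Dinvhalf G B * Qinvhalf B)ᴴ = Dinvhalf G B * Qinvhalf B := by
  simp only [Dinvhalf, Qinvhalf, conjTranspose_mul, diagonal_conjTranspose, star_trivial]
  exact (commute_diagonal _ _).eq

lemma Qhalf_mul_NLR_mul_Qinvhalf :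
    Qhalf B * NLR G B * Qinvhalf B =
      Dinvhalf G B * Qinvhalf B * (Qmat B * LR G B) * (Dinvhalf G B * Qinvhalf B)ᴴ := by
  have hcomm : Qhalf B * Dinvhalf G B = Dinvhalf G B * Qhalf B := (commute_diagonal _ _).eq
  rw [conjTranspose_Dinvhalf_mul_Qinvhalf]
  calc Qhalf B * NLR G B * Qinvhalf B
      = Dinvhalf G B * Qhalf B * LR G B * (Dinvhalf G B * Qinvhalf B) := by
        rw [NLR, ← hcomm]; simp only [Matrix.mul_assoc]
    _ = _ := by rw [← Qinvhalf_mul_Qmat]; simp only [Matrix.mul_assoc]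

lemma Dinvhalf_mul_Qinvhalf_mul_Dhalf_mul_Qhalf (hD : ∀ v, 0 < deg G B v) :
    Dinvhalf G B * Qinvhalf B * (Dhalf G B * Qhalf B) = 1 := by
  simp only [Dinvhalf, Qinvhalf, Dhalf, Qhalf, diagonal_mul_diagonal, ← diagonal_one]
  congr 1; ext v
  have hd := (Real.sqrt_pos.2 (hD v)).ne'
  have hq := (Real.sqrt_pos.2 (qw_pos B v)).ne'
  field_simp

lemma Dhalf_mul_Qhalf_mulVec_one_ne_zero [Nonempty V] (hD : ∀ v, 0 < deg G B v) :
    (Dhalf G B * Qhalf B) *ᵥ (fun _ => (1 : ℝ)) ≠ 0 := by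
  obtain ⟨v⟩ := ‹Nonempty V›
  refine Function.ne_iff.2 ⟨v, ?_⟩
  simp only [Dhalf, Qhalf, diagonal_mul_diagonal, mulVec_diagonal, mul_one, Pi.zero_apply]
  exact mul_ne_zero (Real.sqrt_pos.2 (hD v)).ne' (Real.sqrt_pos.2 (qw_pos B v)).ne'

end RN

/-- If every diagonal entry of `D` is strictly positive, the matrix `Q^{1/2}·𝓛_R·Q^{-1/2}` is
symmetric and positive semidefinite, and `D^{1/2}·Q^{1/2}·1` is an eigenvector of
`Q^{1/2}·𝓛_R·Q^{-1/2}` with eigenvalue `0`. -/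
theorem conjugated_NLR_isSymm_posSemidef_and_eigenvector {V : Type*} [Fintype V] [DecidableEq V]
    [Nonempty V] (G : SimpleGraph V) [DecidableRel G.Adj] (B : Finset V)
    (hD : ∀ v, 0 < deg G B v) :
    (Qhalf B * NLR G B * Qinvhalf B).IsSymm ∧
    (Qhalf B * NLR G B * Qinvhalf B).PosSemidef ∧
    Module.End.HasEigenvector (Matrix.toLin' (Qhalf B * NLR G B * Qinvhalf B)) 0
      ((Dhalf G B * Qhalf B) *ᵥ fun _ => (1 : ℝ)) := by
  have hpsd : (Qhalf B * NLR G B * Qinvhalf B).PosSemidef := by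
    rw [Qhalf_mul_NLR_mul_Qinvhalf, Qmat_mul_LR]
    exact (posSemidef_diagonal_mulVec_one_sub (isSymm_Qmat_mul_reflAdj G B)
      (Qmat_mul_reflAdj_nonneg G B)).mul_mul_conjTranspose_same _
  have hker : (Qhalf B * NLR G B * Qinvhalf B * (Dhalf G B * Qhalf B)) *ᵥ 1 = 0 := by
    rw [Qhalf_mul_NLR_mul_Qinvhalf, conjTranspose_Dinvhalf_mul_Qinvhalf, Matrix.mul_assoc,
      Dinvhalf_mul_Qinvhalf_mul_Dhalf_mul_Qhalf G B hD, Matrix.mul_one, ← mulVec_mulVec,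
      Qmat_mul_LR, diagonal_mulVec_one_sub_mulVec_one, mulVec_zero]
  refine ⟨isHermitian_iff_isSymm.1 hpsd.isHermitian, hpsd, ?_,
    Dhalf_mul_Qhalf_mulVec_one_ne_zero G B hD⟩
  rw [Module.End.mem_eigenspace_iff, toLin'_apply, zero_smul, mulVec_mulVec]
  exact hker
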